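/- Assume inf_{x,y∈S} κ(x,y) > 0. If the equation f = 1 − e^{−T_κ[f]} has a μ-a.e. finite measurable solution f with sup_{x∈S} f(x) < 0, then r*_κ > 1; that is, there exist z > 1 and a μ-a.e. finite measurable function g ≥ 1 with g = z·e^{T_κ[g−1]} μ-a.e. -/

import Mathlib

/-!
Write `h = -f ≥ ε > 0`, so that `exp (T_κ[h]) = 1 + h`. Then `G = 1 + h/2` satisfies
`Φ_z[G] = z·exp (T_κ[h]/2) = z·√(1 + h)`, and since `t ↦ (1 + t/2)/√(1 + t)` is increasing on
`[0, ∞)`, `G` is a supersolution `Φ_z[G] ≤ G` for `z = (1 + ε/2)/√(1 + ε) > 1`. As `Φ_z` is monotone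
and commutes with suprema of increasing sequences (monotone convergence), the iterates `Φ_zⁿ[1]`
increase to a measurable fixed point `g` with `1 ≤ g ≤ G < ∞`.
-/

open MeasureTheory Filter
open scoped ENNReal

/-- Extended exponential on `ℝ≥0∞`, with `eexp ⊤ = ⊤`. -/
noncomputable def eexp (t : ℝ≥0∞) : ℝ≥0∞ :=
  if t = ⊤ then ⊤ else ENNReal.ofReal (Real.exp t.toReal)

/-- The nonlinear operator `Φ_{z,κ}[g](x) = z·exp(T_κ[g-1](x))`. -/
noncomputable def Phi {S : Type*} [MeasurableSpace S] (μ : Measure S)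
    (κ : S → S → ℝ) (z : ℝ) (f : S → ℝ≥0∞) : S → ℝ≥0∞ :=
  fun x => ENNReal.ofReal z * eexp (∫⁻ y, ENNReal.ofReal (κ x y) * (f y - 1) ∂μ)

lemma eexp_eq_exp_coe (t : ℝ≥0∞) : eexp t = EReal.exp t := by
  rcases eq_or_ne t ⊤ with rfl | ht
  · simp [eexp]
  · rw [eexp, if_neg ht, ← EReal.coe_ennreal_toReal ht, EReal.exp_coe]

lemma monotone_eexp : Monotone eexp := fun a b hab => by
  simpa only [eexp_eq_exp_coe] using EReal.exp_monotone (EReal.coe_ennreal_le_coe_ennreal_iff.2 hab)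

lemma continuous_eexp : Continuous eexp := by
  rw [funext eexp_eq_exp_coe]
  exact ENNReal.continuous_exp.comp continuous_coe_ennreal_ereal

lemma one_le_eexp (t : ℝ≥0∞) : 1 ≤ eexp t := by
  simpa only [eexp_eq_exp_coe] using EReal.one_le_exp_iff.2 (EReal.coe_ennreal_nonneg t)

lemma eexp_ofReal {a : ℝ} (ha : 0 ≤ a) : eexp (ENNReal.ofReal a) = ENNReal.ofReal (Real.exp a) := by
  rw [eexp, if_neg ENNReal.ofReal_ne_top, ENNReal.toReal_ofReal ha]

lemma eexp_iSup {ι : Sort*} [Nonempty ι] (t : ι → ℝ≥0∞) : eexp (⨆ i, t i) = ⨆ i, eexp (t i) :=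
  monotone_eexp.map_ciSup_of_continuousAt continuous_eexp.continuousAt

lemma one_lt_one_add_half_div_sqrt {ε : ℝ} (hε : 0 < ε) : 1 < (1 + ε / 2) / √(1 + ε) := by
  rw [one_lt_div (Real.sqrt_pos.2 (by linarith)), Real.sqrt_lt' (by linarith)]
  nlinarith

/-- `t ↦ (1 + t/2)/√(1 + t)` is increasing on `[0, ∞)`. -/
lemma one_add_half_div_sqrt_mul_sqrt_le {a b : ℝ} (ha : 0 ≤ a) (hab : a ≤ b) :
    (1 + a / 2) / √(1 + a) * √(1 + b) ≤ 1 + b / 2 := by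
  rw [div_mul_eq_mul_div, div_le_iff₀ (Real.sqrt_pos.2 (by linarith)),
    ← pow_le_pow_iff_left₀ (mul_nonneg (by linarith) (Real.sqrt_nonneg _))
      (mul_nonneg (by linarith) (Real.sqrt_nonneg _)) two_ne_zero, mul_pow, mul_pow,
    Real.sq_sqrt (by linarith), Real.sq_sqrt (by linarith)]
  nlinarith [mul_nonneg (sub_nonneg.2 hab) (mul_nonneg ha (by linarith : 0 ≤ b))]

section Phi

variable {S : Type*} [MeasurableSpace S] (μ : Measure S) {κ : S → S → ℝ} {z : ℝ}

lemma monotone_Phi : Monotone (Phi μ κ z) := fun g g' hg x => by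
  unfold Phi
  gcongr
  exact monotone_eexp (lintegral_mono fun y => by gcongr; exact hg y)

lemma one_le_Phi (hz : 1 ≤ z) (g : S → ℝ≥0∞) : 1 ≤ Phi μ κ z g := fun _ =>
  one_le_mul (ENNReal.one_le_ofReal.2 hz) (one_le_eexp _)

lemma measurable_Phi [SFinite μ] (hκ : Measurable (Function.uncurry κ)) {g : S → ℝ≥0∞}
    (hg : Measurable g) : Measurable (Phi μ κ z g) := by
  have hT : Measurable fun x => ∫⁻ y, ENNReal.ofReal (κ x y) * (g y - 1) ∂μ :=
    Measurable.lintegral_prod_right'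
      (f := fun p : S × S => ENNReal.ofReal (κ p.1 p.2) * (g p.2 - 1))
      (hκ.ennreal_ofReal.mul ((hg.comp measurable_snd).sub measurable_const))
  exact measurable_const.mul (continuous_eexp.measurable.comp hT)

lemma Phi_iSup (hκ : ∀ x, Measurable (κ x)) {g : ℕ → S → ℝ≥0∞} (hg : ∀ n, Measurable (g n))
    (hmono : Monotone g) : Phi μ κ z (⨆ n, g n) = ⨆ n, Phi μ κ z (g n) := by
  ext x
  have hT : ∫⁻ y, ENNReal.ofReal (κ x y) * ((⨆ n, g n y) - 1) ∂μ
      = ⨆ n, ∫⁻ y, ENNReal.ofReal (κ x y) * (g n y - 1) ∂μ := by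
    simp only [ENNReal.iSup_sub, ENNReal.mul_iSup]
    exact lintegral_iSup (fun n => (hκ x).ennreal_ofReal.mul ((hg n).sub measurable_const))
      fun m n hmn y => by gcongr; exact hmono hmn y
  simp only [Phi, iSup_apply]
  rw [hT, eexp_iSup, ENNReal.mul_iSup]

theorem exists_measurable_fixedPoint_Phi_le [SFinite μ] (hκ : Measurable (Function.uncurry κ))
    (hz : 1 ≤ z) {G : S → ℝ≥0∞} (hG1 : 1 ≤ G) (hG : Phi μ κ z G ≤ G) :
    ∃ g : S → ℝ≥0∞, Measurable g ∧ 1 ≤ g ∧ g ≤ G ∧ Phi μ κ z g = g := by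
  set u : ℕ → S → ℝ≥0∞ := fun n => (Phi μ κ z)^[n] 1
  have hu_succ (n : ℕ) : u (n + 1) = Phi μ κ z (u n) := Function.iterate_succ_apply' _ n 1
  have hu_mono : Monotone u := (monotone_Phi μ).monotone_iterate_of_le_map (one_le_Phi μ hz 1)
  have hu_meas (n : ℕ) : Measurable (u n) := by
    induction n with
    | zero => exact measurable_const
    | succ n ih => rw [hu_succ]; exact measurable_Phi μ hκ ih
  have hu_le (n : ℕ) : u n ≤ G := by
    induction n with
    | zero => exact hG1
    | succ n ih => rw [hu_succ]; exact (monotone_Phi μ ih).trans hG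
  refine ⟨⨆ n, u n, by simpa only [← iSup_apply] using Measurable.iSup hu_meas,
    le_iSup_of_le 0 le_rfl, iSup_le hu_le, ?_⟩
  rw [Phi_iSup μ (fun _ => hκ.of_uncurry_left) hu_meas hu_mono]
  simp only [← hu_succ]
  exact hu_mono.iSup_nat_add 1

lemma Phi_ofReal_apply (hz : 0 ≤ z) {v : S → ℝ} (hv : ∀ y, 1 ≤ v y) {x : S}
    (hκ : ∀ y, 0 ≤ κ x y) (hint : Integrable (fun y => κ x y * (v y - 1)) μ) :
    Phi μ κ z (fun y => ENNReal.ofReal (v y)) x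
      = ENNReal.ofReal (z * Real.exp (∫ y, κ x y * (v y - 1) ∂μ)) := by
  have hnonneg (y : S) : 0 ≤ κ x y * (v y - 1) := mul_nonneg (hκ y) (by linarith [hv y])
  have hT : ∫⁻ y, ENNReal.ofReal (κ x y) * (ENNReal.ofReal (v y) - 1) ∂μ
      = ENNReal.ofReal (∫ y, κ x y * (v y - 1) ∂μ) := by
    rw [ofReal_integral_eq_lintegral_ofReal hint (ae_of_all _ hnonneg)]
    refine lintegral_congr fun y => ?_
    rw [← ENNReal.ofReal_one, ← ENNReal.ofReal_sub _ zero_le_one, ← ENNReal.ofReal_mul (hκ y)]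
  rw [Phi, hT, eexp_ofReal (integral_nonneg hnonneg), ENNReal.ofReal_mul hz]

lemma Phi_one_sub_half_le (hκ : ∀ x y, 0 ≤ κ x y) {f : S → ℝ}
    (hfint : ∀ x, Integrable (fun y => κ x y * f y) μ)
    (hfeq : ∀ x, f x = 1 - Real.exp (-∫ y, κ x y * f y ∂μ)) {ε : ℝ} (hε : 0 ≤ ε)
    (hf : ∀ x, f x ≤ -ε) :
    Phi μ κ ((1 + ε / 2) / √(1 + ε)) (fun y => ENNReal.ofReal (1 - f y / 2))
      ≤ fun y => ENNReal.ofReal (1 - f y / 2) := fun x => by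
  have hκf (y : S) : κ x y * (1 - f y / 2 - 1) = -(κ x y * f y) / 2 := by ring
  have hint : Integrable (fun y => κ x y * (1 - f y / 2 - 1)) μ := by
    refine ((hfint x).neg.div_const 2).congr (ae_of_all _ fun y => ?_)
    simp only [Pi.neg_apply, hκf]
  have hexp : Real.exp (∫ y, κ x y * (1 - f y / 2 - 1) ∂μ) = √(1 + -f x) := by
    rw [integral_congr_ae (ae_of_all _ hκf), integral_div, integral_neg, Real.exp_half]
    congr 1
    linarith [hfeq x]
  have hz : 0 ≤ (1 + ε / 2) / √(1 + ε) := div_nonneg (by linarith) (Real.sqrt_nonneg _)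
  rw [Phi_ofReal_apply μ hz (fun y => by linarith [hf y]) (hκ x) hint, hexp]
  exact ENNReal.ofReal_le_ofReal
    ((one_add_half_div_sqrt_mul_sqrt_le hε (le_neg.2 (hf x))).trans_eq (by ring))

end Phi

theorem stmt11_general {S : Type*} [MeasurableSpace S]
    (μ : Measure S) [IsProbabilityMeasure μ]
    (κ : S → S → ℝ) (hκmeas : Measurable (Function.uncurry κ))
    (hκinf : ∃ b : ℝ, 0 < b ∧ ∀ x y, b ≤ κ x y)
    (f : S → ℝ)
    (hfint : ∀ x, Integrable (fun y => κ x y * f y) μ)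
    (hfsup : ∃ s : ℝ, s < 0 ∧ ∀ x, f x ≤ s)
    (hfeq : ∀ x, f x = 1 - Real.exp (-∫ y, κ x y * f y ∂μ)) :
    ∃ z : ℝ, 1 < z ∧ ∃ g : S → ℝ≥0∞, Measurable g ∧ (∀ x, 1 ≤ g x) ∧
      (∀ᵐ x ∂μ, g x ≠ ⊤) ∧ (∀ᵐ x ∂μ, Phi μ κ z g x = g x) := by
  obtain ⟨b, hb, hbκ⟩ := hκinf
  obtain ⟨s, hs, hf⟩ := hfsup
  obtain ⟨ε, hε, rfl⟩ : ∃ ε, 0 < ε ∧ s = -ε := ⟨-s, by linarith, by ring⟩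
  have hκ (x y : S) : 0 ≤ κ x y := hb.le.trans (hbκ x y)
  have hz := one_lt_one_add_half_div_sqrt hε
  have hG1 : 1 ≤ fun y => ENNReal.ofReal (1 - f y / 2) := fun y =>
    ENNReal.one_le_ofReal.2 (by linarith [hf y, hε])
  obtain ⟨g, hg, hg1, hgG, hfix⟩ := exists_measurable_fixedPoint_Phi_le μ hκmeas hz.le hG1
    (Phi_one_sub_half_le μ hκ hfint hfeq hε.le hf)
  exact ⟨_, hz, g, hg, hg1, ae_of_all _ fun x => ne_top_of_le_ne_top ENNReal.ofReal_ne_top (hgG x),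
    ae_of_all _ (congrFun hfix)⟩

theorem stmt11 {S : Type*} [MeasurableSpace S] [MetricSpace S] [BorelSpace S]
    [TopologicalSpace.SeparableSpace S]
    (μ : Measure S) [IsProbabilityMeasure μ]
    (κ : S → S → ℝ) (hκmeas : Measurable (Function.uncurry κ))
    (hκsymm : ∀ x y, κ x y = κ y x)
    (hκinf : ∃ b : ℝ, 0 < b ∧ ∀ x y, b ≤ κ x y)
    (f : S → ℝ) (hfmeas : Measurable f)
    (hfint : ∀ x, Integrable (fun y => κ x y * f y) μ)
    (hfsup : ∃ s : ℝ, s < 0 ∧ ∀ x, f x ≤ s)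
    (hfeq : ∀ x, f x = 1 - Real.exp (-∫ y, κ x y * f y ∂μ)) :
    ∃ z : ℝ, 1 < z ∧ ∃ g : S → ℝ≥0∞, Measurable g ∧ (∀ x, 1 ≤ g x) ∧
      (∀ᵐ x ∂μ, g x ≠ ⊤) ∧ (∀ᵐ x ∂μ, Phi μ κ z g x = g x) :=
  stmt11_general μ κ hκmeas hκinf f hfint hfsup hfeq
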